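/- arXiv:1709.07589 — 6 statements merged into one kernel-verified Lean document; each statement's English description precedes it below -/
import Mathlib

section
/- Let m ≥ 1 be an integer and q > 0 a real number. Then every complex root t of the polynomial P(t) = ∑_{j=0}^{m} q^j t^{2j} satisfies |t| = q^{-1/2}. -/
/-! With `z = q t²` the polynomial is the geometric sum `1 + z + ⋯ + zᵐ`, so a root has
`z^(m+1) = 1`, hence `q |t|² = |z| = 1`. -/

open Finset

theorem pow_eq_one_of_geom_sum_eq_zero {R : Type*} [Ring R] {z : R} {n : ℕ}
    (h : ∑ j ∈ range n, z ^ j = 0) : z ^ n = 1 := by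
  have hmul := geom_sum_mul z n
  rw [h, zero_mul] at hmul
  exact sub_eq_zero.1 hmul.symm

theorem norm_eq_one_of_geom_sum_eq_zero {𝕜 : Type*} [NormedDivisionRing 𝕜] {z : 𝕜} {n : ℕ}
    (hn : n ≠ 0) (h : ∑ j ∈ range n, z ^ j = 0) : ‖z‖ = 1 :=
  (pow_eq_one_iff_of_nonneg (norm_nonneg z) hn).1 <| by
    rw [← norm_pow, pow_eq_one_of_geom_sum_eq_zero h, norm_one]

theorem Real.eq_rpow_neg_half_of_mul_sq_eq_one {q x : ℝ} (hq : 0 < q) (hx : 0 ≤ x)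
    (h : q * x ^ 2 = 1) : x = q ^ (-(1 / 2) : ℝ) := by
  have hsq : x ^ 2 = q⁻¹ := eq_inv_of_mul_eq_one_right h
  rw [← Real.sqrt_sq hx, hsq, Real.sqrt_inv, Real.sqrt_eq_rpow, Real.rpow_neg hq.le]

theorem stmt0_general (m : ℕ) (q : ℝ) (hq : 0 < q) (t : ℂ)
    (ht : ∑ j ∈ Finset.range (m + 1), (q : ℂ) ^ j * t ^ (2 * j) = 0) :
    ‖t‖ = q ^ (-(1 / 2) : ℝ) := by
  have hgeom : ∑ j ∈ range (m + 1), ((q : ℂ) * t ^ 2) ^ j = 0 := by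
    simpa only [mul_pow, pow_mul] using ht
  have hunit := norm_eq_one_of_geom_sum_eq_zero m.succ_ne_zero hgeom
  rw [norm_mul, norm_pow, Complex.norm_real, Real.norm_of_nonneg hq.le] at hunit
  exact Real.eq_rpow_neg_half_of_mul_sq_eq_one hq (norm_nonneg t) hunit

/-- Strong RH for the torus knots `T(2,2m+1)` at `a = 0`: every complex root `t` of
`P(t) = ∑_{j=0}^m q^j t^{2j}` (with `m ≥ 1` and `q > 0` real) has `|t| = q^{-1/2}`. -/
theorem stmt0 (m : ℕ) (hm : 1 ≤ m) (q : ℝ) (hq : 0 < q) (t : ℂ)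
    (ht : ∑ j ∈ Finset.range (m + 1), (q : ℂ) ^ j * t ^ (2 * j) = 0) :
    ‖t‖ = q ^ (-(1 / 2) : ℝ) :=
  stmt0_general m q hq t ht
end

section
/- Let q > 0 be real and p(t) = q^2 t^4 − q t^3 + q t^2 − t + 1. Then: (i) for every q > 0, p has at least two non-real complex-conjugate roots of modulus q^{-1/2}; (ii) if 0 < q < 4/9, then p has exactly two real roots, both positive, with product 1/q; (iii) if q > 4/9, then all four roots of p are non-real and have modulus q^{-1/2}. -/
/-!
Since `q²t⁴ − qt³ + qt² − t + 1 = (qt² + αt + 1)(qt² + βt + 1)` whenever `α + β = −1` and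
`αβ = −q`, the roots `α, β = (−1 ∓ √(1 + 4q))/2` of `x² + x − q` split the quartic into two
quadratics with constant term `1`. A real quadratic with negative discriminant has a pair of
non-real roots whose product, hence squared modulus, is `1/q`. The factor with `β` always has
`β² < 4q`, while `α² < 4q` holds exactly when `q > 4/9`; below that threshold the `α`-factor
has two positive real roots instead.
-/

open Complex

lemma quartic_eq_mul_quadratics {R : Type*} [CommRing R] {q α β : R}
    (hsum : α + β = -1) (hprod : α * β = -q) (t : R) :
    q ^ 2 * t ^ 4 - q * t ^ 3 + q * t ^ 2 - t + 1 =
      (q * t ^ 2 + α * t + 1) * (q * t ^ 2 + β * t + 1) := by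
  linear_combination (-(q * t ^ 3) - t) * hsum - t ^ 2 * hprod

lemma exists_quartic_factor_coeffs {q : ℝ} (hq : 0 < q) :
    ∃ α β : ℝ, α + β = -1 ∧ α * β = -q ∧ α < 0 ∧ β ^ 2 < 4 * q ∧
      (q < 4 / 9 → 4 * q < α ^ 2) ∧ (4 / 9 < q → α ^ 2 < 4 * q) := by
  obtain ⟨s, hs, hs0⟩ : ∃ s : ℝ, s ^ 2 = 1 + 4 * q ∧ 0 ≤ s :=
    ⟨√(1 + 4 * q), Real.sq_sqrt (by positivity), Real.sqrt_nonneg _⟩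
  have hs1 : 1 < s := by nlinarith
  refine ⟨-(1 + s) / 2, (s - 1) / 2, by ring, by linear_combination (-1 / 4) * hs,
    by linarith, by nlinarith, fun h => by nlinarith, fun h => by nlinarith⟩

section Quadratic

variable {a b c : ℝ}

lemma quadratic_ne_zero_of_sq_lt (ha : 0 < a) (hd : b ^ 2 < 4 * a * c) (x : ℝ) :
    a * x ^ 2 + b * x + c ≠ 0 := by
  intro h
  nlinarith [sq_nonneg (2 * a * x + b)]

lemma im_ne_zero_and_normSq_eq_of_quadratic_eq_zero (ha : 0 < a) (hd : b ^ 2 < 4 * a * c)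
    {z : ℂ} (hz : (a : ℂ) * z ^ 2 + b * z + c = 0) :
    z.im ≠ 0 ∧ normSq z = c / a := by
  obtain ⟨x, y⟩ := z
  have hre : a * (x ^ 2 - y ^ 2) + b * x + c = 0 := by
    simpa [sq] using congrArg re hz
  have him : y * (2 * a * x + b) = 0 := by
    linear_combination (by simpa [sq] using congrArg im hz : a * (x * y + y * x) + b * y = 0)
  have hy : y ≠ 0 := by
    rintro rfl
    exact quadratic_ne_zero_of_sq_lt ha hd x (by linear_combination hre)
  have hx : 2 * a * x + b = 0 := (mul_eq_zero.mp him).resolve_left hy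
  refine ⟨hy, ?_⟩
  rw [normSq_mk, eq_div_iff ha.ne']
  linear_combination x * hx - hre

lemma exists_im_ne_zero_quadratic_eq_zero (ha : 0 < a) (hd : b ^ 2 < 4 * a * c) :
    ∃ z : ℂ, z.im ≠ 0 ∧ (a : ℂ) * z ^ 2 + b * z + c = 0 := by
  obtain ⟨r, hr, hr0⟩ : ∃ r : ℝ, r ^ 2 = 4 * a * c - b ^ 2 ∧ 0 < r :=
    ⟨√(4 * a * c - b ^ 2), Real.sq_sqrt (by linarith), Real.sqrt_pos.mpr (by linarith)⟩
  refine ⟨⟨-b / (2 * a), r / (2 * a)⟩, (by positivity : r / (2 * a) ≠ 0), ?_⟩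
  apply Complex.ext <;>
    simp only [sq, add_re, add_im, mul_re, mul_im, ofReal_re, ofReal_im, zero_re, zero_im,
      zero_mul, sub_zero, add_zero] <;> field_simp
  · linear_combination -hr
  · ring

lemma exists_pos_roots_of_sq_gt (ha : 0 < a) (hb : b < 0) (hc : 0 < c)
    (hd : 4 * a * c < b ^ 2) :
    ∃ t₁ t₂ : ℝ, t₁ ≠ t₂ ∧ 0 < t₁ ∧ 0 < t₂ ∧ t₁ * t₂ = c / a ∧
      ∀ t : ℝ, a * t ^ 2 + b * t + c = 0 ↔ t = t₁ ∨ t = t₂ := by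
  obtain ⟨e, he, he0⟩ : ∃ e : ℝ, e ^ 2 = b ^ 2 - 4 * a * c ∧ 0 < e :=
    ⟨√(b ^ 2 - 4 * a * c), Real.sq_sqrt (by linarith), Real.sqrt_pos.mpr (by linarith)⟩
  have heb : e < -b := by nlinarith
  refine ⟨(-b + e) / (2 * a), (-b - e) / (2 * a), ?_, by apply div_pos <;> linarith,
    by apply div_pos <;> linarith, ?_, fun t => ?_⟩
  · rw [Ne, div_left_inj' (by positivity)]
    linarith
  · field_simp
    linear_combination -he
  · rw [sq, ← quadratic_eq_zero_iff ha.ne' (by rw [discrim, ← he]; ring) t]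

end Quadratic

/-- Root structure of `p(t) = q²t⁴ − qt³ + qt² − t + 1` (the `a = 0` superpolynomial
of the link `2T(2,1)` after `q ↦ qt`) for real `q > 0`:
(i) there is always a conjugate pair of non-real roots of modulus `q^{-1/2}`;
(ii) for `0 < q < 4/9` exactly two real roots, positive, with product `1/q`;
(iii) for `q > 4/9` all four roots are non-real of modulus `q^{-1/2}`. -/
theorem stmt4 (q : ℝ) (hq : 0 < q) :
    (∃ z : ℂ, z.im ≠ 0 ∧
      (q : ℂ) ^ 2 * z ^ 4 - (q : ℂ) * z ^ 3 + (q : ℂ) * z ^ 2 - z + 1 = 0 ∧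
      (q : ℂ) ^ 2 * (starRingEnd ℂ z) ^ 4 - (q : ℂ) * (starRingEnd ℂ z) ^ 3 +
        (q : ℂ) * (starRingEnd ℂ z) ^ 2 - starRingEnd ℂ z + 1 = 0 ∧
      ‖z‖ = q ^ (-(1 / 2) : ℝ)) ∧
    (q < 4 / 9 → ∃ t₁ t₂ : ℝ, t₁ ≠ t₂ ∧ 0 < t₁ ∧ 0 < t₂ ∧
      q ^ 2 * t₁ ^ 4 - q * t₁ ^ 3 + q * t₁ ^ 2 - t₁ + 1 = 0 ∧
      q ^ 2 * t₂ ^ 4 - q * t₂ ^ 3 + q * t₂ ^ 2 - t₂ + 1 = 0 ∧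
      t₁ * t₂ = 1 / q ∧
      ∀ t : ℝ, q ^ 2 * t ^ 4 - q * t ^ 3 + q * t ^ 2 - t + 1 = 0 → t = t₁ ∨ t = t₂) ∧
    (4 / 9 < q → ∀ z : ℂ,
      (q : ℂ) ^ 2 * z ^ 4 - (q : ℂ) * z ^ 3 + (q : ℂ) * z ^ 2 - z + 1 = 0 →
      z.im ≠ 0 ∧ ‖z‖ = q ^ (-(1 / 2) : ℝ)) := by
  obtain ⟨α, β, hsum, hprod, hα, hβ, hα_gt, hα_lt⟩ := exists_quartic_factor_coeffs hq
  have hfacC := quartic_eq_mul_quadratics (q := (q : ℂ)) (α := α) (β := β)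
    (by exact_mod_cast hsum) (by exact_mod_cast hprod)
  have hfacR := quartic_eq_mul_quadratics hsum hprod
  have hnorm {z : ℂ} (hz : normSq z = 1 / q) : ‖z‖ = q ^ (-(1 / 2) : ℝ) := by
    rw [norm_def, hz, Real.rpow_neg hq.le, ← Real.sqrt_eq_rpow, one_div, Real.sqrt_inv]
  refine ⟨?_, fun h => ?_, fun h z hz => ?_⟩
  · obtain ⟨z, hz_im, hz⟩ :=
      exists_im_ne_zero_quadratic_eq_zero (b := β) (c := 1) hq (by linarith)
    have hnormSq := (im_ne_zero_and_normSq_eq_of_quadratic_eq_zero hq (by linarith) hz).2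
    rw [ofReal_one] at hz
    have hz4 := (hfacC z).trans (mul_eq_zero_of_right _ hz)
    exact ⟨z, hz_im, hz4, by simpa using congrArg (starRingEnd ℂ) hz4, hnorm hnormSq⟩
  · obtain ⟨t₁, t₂, hne, ht₁, ht₂, hprod₁₂, hroots⟩ :=
      exists_pos_roots_of_sq_gt hq hα one_pos (by linarith [hα_gt h])
    refine ⟨t₁, t₂, hne, ht₁, ht₂, ?_, ?_, hprod₁₂, fun t ht => ?_⟩
    · rw [hfacR, (hroots t₁).mpr (Or.inl rfl), zero_mul]
    · rw [hfacR, (hroots t₂).mpr (Or.inr rfl), zero_mul]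
    · rw [hfacR] at ht
      exact (hroots t).mp ((mul_eq_zero.mp ht).resolve_right
        (quadratic_ne_zero_of_sq_lt hq (by linarith) t))
  · rw [hfacC] at hz
    obtain ⟨hz_im, hz_norm⟩ := (mul_eq_zero.mp hz).elim
      (fun hα_root => im_ne_zero_and_normSq_eq_of_quadratic_eq_zero (b := α) (c := 1) hq
        (by linarith [hα_lt h]) (by simpa using hα_root))
      (fun hβ_root => im_ne_zero_and_normSq_eq_of_quadratic_eq_zero (b := β) (c := 1) hq
        (by linarith) (by simpa using hβ_root))
    exact ⟨hz_im, hnorm hz_norm⟩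
end

section
/- Let Γ ⊆ ℕ be a symmetric numerical semigroup with δ gaps (n ∈ Γ ⟺ 2δ−1−n ∉ Γ for 0 ≤ n ≤ 2δ−1), and g(n) = #{m < n : m ∉ Γ}. Define the polynomial L_Γ(q,t) = ∑_{n ∈ Γ, n−1 ∉ Γ} q^{g(n)} t^n − ∑_{n ≥ 1, n ∉ Γ, n−1 ∈ Γ} q^{g(n−1)} t^n (finite sums; n = 0 is in the first sum). Then, as an identity of rational functions, (q t^2)^δ · L_Γ(q, 1/(q t)) = L_Γ(q, t). -/
open Finset

/-- gap-counting function -/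
private def gg (Γ : Set ℕ) [DecidablePred (· ∈ Γ)] (n : ℕ) : ℕ :=
  ((Finset.range n).filter (fun m => m ∉ Γ)).card

private lemma refl_count (Γ : Set ℕ) [DecidablePred (· ∈ Γ)] (δ : ℕ)
    (hsym : ∀ n ≤ 2 * δ - 1, (n ∈ Γ ↔ (2 * δ - 1 - n) ∉ Γ)) (hδ : 1 ≤ δ)
    (n : ℕ) (hn : n ≤ 2 * δ) :
    ((Finset.Ico (2*δ - n) (2*δ)).filter (fun m => m ∉ Γ)).card
      = ((Finset.range n).filter (fun m => m ∈ Γ)).card := by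
  apply Finset.card_bij (fun m _ => 2*δ - 1 - m)
  · intro m hm
    simp only [Finset.mem_filter, Finset.mem_Ico] at hm
    simp only [Finset.mem_filter, Finset.mem_range]
    refine ⟨by omega, ?_⟩
    refine (hsym (2*δ-1-m) (by omega)).mpr ?_
    have e : 2*δ-1-(2*δ-1-m) = m := by omega
    rw [e]; exact hm.2
  · intro a ha b hb h
    simp only [Finset.mem_filter, Finset.mem_Ico] at ha hb
    omega
  · intro b hb
    simp only [Finset.mem_filter, Finset.mem_range] at hb
    refine ⟨2*δ - 1 - b, ?_, by omega⟩
    simp only [Finset.mem_filter, Finset.mem_Ico]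
    exact ⟨⟨by omega, by omega⟩, (hsym b (by omega)).mp hb.2⟩

private lemma gaps_card (Γ : Set ℕ) [DecidablePred (· ∈ Γ)] (δ : ℕ)
    (hsym : ∀ n ≤ 2 * δ - 1, (n ∈ Γ ↔ (2 * δ - 1 - n) ∉ Γ)) (hδ : 1 ≤ δ) :
    gg Γ (2*δ) = δ := by
  have h2 := refl_count Γ δ hsym hδ (2*δ) le_rfl
  rw [Nat.sub_self, ← Finset.range_eq_Ico] at h2
  have h3 := Finset.card_filter_add_card_filter_not
    (s := Finset.range (2*δ)) (fun m => m ∈ Γ)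
  rw [Finset.card_range] at h3
  unfold gg
  omega

private lemma gap_lt (Γ : Set ℕ) [DecidablePred (· ∈ Γ)] (δ : ℕ)
    (hfin : Γᶜ.Finite) (hcard : hfin.toFinset.card = δ)
    (hsym : ∀ n ≤ 2 * δ - 1, (n ∈ Γ ↔ (2 * δ - 1 - n) ∉ Γ)) (hδ : 1 ≤ δ) :
    ∀ n, n ∉ Γ → n < 2*δ := by
  have h1 : gg Γ (2*δ) = δ := gaps_card Γ δ hsym hδ
  have hsub : (Finset.range (2*δ)).filter (fun m => m ∉ Γ) ⊆ hfin.toFinset := by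
    intro m hm
    simp only [Finset.mem_filter] at hm
    simp [Set.Finite.mem_toFinset, hm.2]
  have heq := Finset.eq_of_subset_of_card_le hsub (by rw [hcard]; exact le_of_eq h1.symm)
  intro n hn
  have : n ∈ hfin.toFinset := by simp [Set.Finite.mem_toFinset, hn]
  rw [← heq] at this
  simp only [Finset.mem_filter, Finset.mem_range] at this
  exact this.1

private lemma gsum (Γ : Set ℕ) [DecidablePred (· ∈ Γ)] (δ : ℕ)
    (hsym : ∀ n ≤ 2 * δ - 1, (n ∈ Γ ↔ (2 * δ - 1 - n) ∉ Γ)) (hδ : 1 ≤ δ)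
    (n : ℕ) (hn : n ≤ 2*δ) :
    gg Γ (2*δ - n) + n = gg Γ n + δ := by
  have hsplit : gg Γ (2*δ) = gg Γ (2*δ - n)
      + ((Finset.Ico (2*δ - n) (2*δ)).filter (fun m => m ∉ Γ)).card := by
    unfold gg
    simp only [Finset.range_eq_Ico]
    rw [← Finset.Ico_union_Ico_eq_Ico (Nat.zero_le (2*δ - n)) (by omega : 2*δ - n ≤ 2*δ),
      Finset.filter_union, Finset.card_union_of_disjoint]
    exact Finset.disjoint_filter_filter (Finset.Ico_disjoint_Ico_consecutive 0 (2*δ - n) (2*δ))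
  have hrefl := refl_count Γ δ hsym hδ n hn
  have hcomp := Finset.card_filter_add_card_filter_not
    (s := Finset.range n) (fun m => m ∈ Γ)
  rw [Finset.card_range] at hcomp
  have h1 : gg Γ (2*δ) = δ := gaps_card Γ δ hsym hδ
  unfold gg at *
  omega

private lemma gg_succ_notmem (Γ : Set ℕ) [DecidablePred (· ∈ Γ)] (n : ℕ) (h : n ∉ Γ) :
    gg Γ (n+1) = gg Γ n + 1 := by
  unfold gg
  rw [Finset.range_add_one, Finset.filter_insert, if_pos h,
    Finset.card_insert_of_notMem (by simp)]

private lemma gg_succ_mem (Γ : Set ℕ) [DecidablePred (· ∈ Γ)] (n : ℕ) (h : n ∈ Γ) :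
    gg Γ (n+1) = gg Γ n := by
  unfold gg
  rw [Finset.range_add_one, Finset.filter_insert, if_neg (by simp [h])]

private lemma alg {K : Type*} [Field K] (q t : K) (hq : q ≠ 0) (ht : t ≠ 0)
    (a b n m δ : ℕ) (h1 : b + n = a + δ) (h2 : m + n = 2*δ) :
    (q*t^2)^δ * (q^a * (1/(q*t))^n) = q^b * t^m := by
  have key : (q*t^2)^δ * (q^a * (1/(q*t))^n) = (q^(δ+a) * t^(2*δ)) / (q^n * t^n) := by
    rw [div_pow, one_pow, mul_pow q t, mul_pow q (t^2), ← pow_mul, pow_add]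
    ring
  rw [key, div_eq_iff (mul_ne_zero (pow_ne_zero _ hq) (pow_ne_zero _ ht)),
    show δ + a = b + n by omega, ← h2, pow_add, pow_add]
  ring

/-- The polynomial `L_Γ(q,t) = ∑_{n∈Γ, n−1∉Γ} q^{g(n)} t^n − ∑_{n≥1, n∉Γ, n−1∈Γ}
q^{g(n−1)} t^n` (the term `n = 0` is in the first sum), truncated at any `N`
beyond all contributing indices. -/
def Lsum {K : Type*} [Field K] (Γ : Set ℕ) [DecidablePred (· ∈ Γ)]
    (N : ℕ) (q t : K) : K :=
  (∑ n ∈ (Finset.range N).filter (fun n => n ∈ Γ ∧ (n = 0 ∨ (n - 1) ∉ Γ)),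
      q ^ ((Finset.range n).filter (fun m => m ∉ Γ)).card * t ^ n) -
    ∑ n ∈ (Finset.range N).filter (fun n => 1 ≤ n ∧ n ∉ Γ ∧ (n - 1) ∈ Γ),
      q ^ ((Finset.range (n - 1)).filter (fun m => m ∉ Γ)).card * t ^ n

/-- Functional equation `(qt²)^δ · L_Γ(q, 1/(qt)) = L_Γ(q,t)` for a symmetric
numerical semigroup `Γ` with `δ` gaps. -/
theorem stmt10 {K : Type*} [Field K] (Γ : Set ℕ) [DecidablePred (· ∈ Γ)]
    (h0 : 0 ∈ Γ) (hadd : ∀ a ∈ Γ, ∀ b ∈ Γ, a + b ∈ Γ) (δ : ℕ) (hfin : Γᶜ.Finite)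
    (hcard : hfin.toFinset.card = δ)
    (hsym : ∀ n ≤ 2 * δ - 1, (n ∈ Γ ↔ (2 * δ - 1 - n) ∉ Γ))
    (N : ℕ) (hN : ∀ n, n ∉ Γ → n + 2 ≤ N)
    (q t : K) (hq : q ≠ 0) (ht : t ≠ 0) :
    (q * t ^ 2) ^ δ * Lsum Γ N q (1 / (q * t)) = Lsum Γ N q t := by
  rcases Nat.eq_zero_or_pos δ with hδ0 | hδ
  · exfalso
    subst hδ0
    have h2 := (hsym 0 (by omega)).mp h0
    norm_num at h2
    exact h2 h0
  have hlt : ∀ n, n ∉ Γ → n < 2*δ := gap_lt Γ δ hfin hcard hsym hδ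
  have hfrob : 2*δ - 1 ∉ Γ := by
    have := (hsym 0 (by omega)).mp h0
    simpa using this
  have hNbig : 2*δ + 1 ≤ N := by
    have := hN _ hfrob
    omega
  have h2δΓ : 2*δ ∈ Γ := by
    by_contra h
    exact absurd (hlt _ h) (by omega)
  -- bound for first-sum indices
  have hAbound : ∀ n, n ∈ Γ → (n = 0 ∨ n - 1 ∉ Γ) → n ≤ 2*δ := by
    intro n h1 h2
    rcases h2 with h | h
    · omega
    · have := hlt _ h; omega
  have hAmap : ∀ n, n ∈ Γ → (n = 0 ∨ n - 1 ∉ Γ) →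
      (2*δ - n ∈ Γ ∧ (2*δ - n = 0 ∨ (2*δ - n) - 1 ∉ Γ)) := by
    intro n h1 h2
    have hb := hAbound n h1 h2
    constructor
    · rcases h2 with rfl | h
      · simpa using h2δΓ
      · have hn1 : 1 ≤ n := by
          rcases Nat.eq_zero_or_pos n with rfl | h'
          · exact absurd h0 (by simpa using h)
          · exact h'
        have hs := hsym (n-1) (by omega)
        rw [show 2*δ-1-(n-1) = 2*δ - n by omega] at hs
        by_contra hc
        exact h (hs.mpr hc)
    · by_cases hn : n = 2*δ
      · left; omega
      · right
        rw [show 2*δ - n - 1 = 2*δ-1-n by omega]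
        exact (hsym n (by omega)).mp h1
  have hBmap : ∀ n, 1 ≤ n → n ∉ Γ → n - 1 ∈ Γ →
      (1 ≤ 2*δ - n ∧ 2*δ - n ∉ Γ ∧ (2*δ - n) - 1 ∈ Γ) := by
    intro n h1 h2 h3
    have hb : n < 2*δ := hlt _ h2
    refine ⟨by omega, ?_, ?_⟩
    · have hs := hsym (n-1) (by omega)
      rw [show 2*δ-1-(n-1) = 2*δ - n by omega] at hs
      exact hs.mp h3
    · have hs := hsym n (by omega)
      rw [show 2*δ-1-n = 2*δ - n - 1 by omega] at hs
      by_contra hc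
      exact h2 (hs.mpr hc)
  rw [Lsum, Lsum, mul_sub]
  congr 1
  · rw [Finset.mul_sum]
    apply Finset.sum_nbij' (i := fun n => 2*δ - n) (j := fun n => 2*δ - n)
    · intro n hn
      simp only [Finset.mem_filter, Finset.mem_range] at hn ⊢
      exact ⟨by omega, hAmap n hn.2.1 hn.2.2⟩
    · intro n hn
      simp only [Finset.mem_filter, Finset.mem_range] at hn ⊢
      exact ⟨by omega, hAmap n hn.2.1 hn.2.2⟩
    · intro n hn
      simp only [Finset.mem_filter, Finset.mem_range] at hn
      have := hAbound n hn.2.1 hn.2.2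
      omega
    · intro n hn
      simp only [Finset.mem_filter, Finset.mem_range] at hn
      have := hAbound n hn.2.1 hn.2.2
      omega
    · intro n hn
      simp only [Finset.mem_filter, Finset.mem_range] at hn
      have hb := hAbound n hn.2.1 hn.2.2
      exact alg q t hq ht _ _ n (2*δ - n) δ (gsum Γ δ hsym hδ n hb) (by omega)
  · rw [Finset.mul_sum]
    apply Finset.sum_nbij' (i := fun n => 2*δ - n) (j := fun n => 2*δ - n)
    · intro n hn
      simp only [Finset.mem_filter, Finset.mem_range] at hn ⊢
      exact ⟨by omega, hBmap n hn.2.1 hn.2.2.1 hn.2.2.2⟩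
    · intro n hn
      simp only [Finset.mem_filter, Finset.mem_range] at hn ⊢
      exact ⟨by omega, hBmap n hn.2.1 hn.2.2.1 hn.2.2.2⟩
    · intro n hn
      simp only [Finset.mem_filter, Finset.mem_range] at hn
      have := hlt n hn.2.2.1
      omega
    · intro n hn
      simp only [Finset.mem_filter, Finset.mem_range] at hn
      have := hlt n hn.2.2.1
      omega
    · intro n hn
      simp only [Finset.mem_filter, Finset.mem_range] at hn
      obtain ⟨hnN, h1, h2, h3⟩ := hn
      have hb : n < 2*δ := hlt _ h2
      have e1 : gg Γ (2*δ - (n+1)) + (n+1) = gg Γ (n+1) + δ :=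
        gsum Γ δ hsym hδ (n+1) (by omega)
      have e2 : gg Γ (n+1) = gg Γ n + 1 := gg_succ_notmem Γ n h2
      have e3 : gg Γ n = gg Γ (n-1) := by
        have := gg_succ_mem Γ (n-1) h3
        rw [show n-1+1 = n by omega] at this
        exact this
      have e4 : 2*δ - n - 1 = 2*δ - (n+1) := by omega
      show (q*t^2)^δ * (q ^ gg Γ (n-1) * (1/(q*t))^n) = q ^ gg Γ (2*δ - n - 1) * t ^ (2*δ - n)
      rw [e4]
      exact alg q t hq ht _ _ n (2*δ - n) δ (by omega) (by omega)
end

section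
/- Let m ≥ 1 and let Γ = ⟨2, 2m+1⟩ = {0, 2, 4, ..., 2m} ∪ {n : n ≥ 2m+1} be the numerical semigroup generated by 2 and 2m+1, with g(n) = #{k < n : k ∉ Γ}. Then L_Γ(q,t) := ∑_{n ∈ Γ, n−1 ∉ Γ} q^{g(n)} t^n − ∑_{n ∉ Γ, n−1 ∈ Γ} q^{g(n−1)} t^n = ∑_{j=0}^{m} q^j t^{2j} − t·∑_{j=0}^{m−1} q^j t^{2j}. -/
/-- The numerical semigroup `Γ = ⟨2, 2m+1⟩ = {0,2,4,…,2m} ∪ {n : n ≥ 2m+1}`. -/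
def Gam11 (m : ℕ) : ℕ → Prop := fun n => Even n ∨ 2 * m + 1 ≤ n

instance (m : ℕ) : DecidablePred (Gam11 m) := fun n => by
  unfold Gam11; infer_instance

/-!
Below `2m+1` the semigroup `⟨2, 2m+1⟩` consists of the even numbers, so its gaps are
`1, 3, …, 2m-1`. Hence the `n` entering `Γ` are `0, 2, …, 2m`, each preceded by `j = n/2` gaps,
and the `n` leaving `Γ` are `1, 3, …, 2m-1`, with `(n-1)/2` gaps below `n-1`.
-/

open Finset

namespace Gam11

variable {m N : ℕ}

theorem filter_not_range_two_mul {j : ℕ} (hj : j ≤ m) :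
    (range (2 * j)).filter (fun k => ¬ Gam11 m k) = (range j).image (fun i => 2 * i + 1) := by
  ext k
  simp only [mem_filter, mem_range, mem_image, Gam11, Nat.even_iff, not_or, not_le]
  constructor
  · intro hk
    exact ⟨k / 2, by omega, by omega⟩
  · rintro ⟨i, hi, rfl⟩
    omega

theorem card_filter_not_range_two_mul {j : ℕ} (hj : j ≤ m) :
    ((range (2 * j)).filter (fun k => ¬ Gam11 m k)).card = j := by
  rw [filter_not_range_two_mul hj, card_image_of_injective _ (fun a b h => by omega), card_range]

theorem filter_entry_eq_image (hN : 2 * m + 1 ≤ N) :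
    (range N).filter (fun n => Gam11 m n ∧ (n = 0 ∨ ¬ Gam11 m (n - 1))) =
      (range (m + 1)).image (fun j => 2 * j) := by
  ext n
  simp only [mem_filter, mem_range, mem_image, Gam11, Nat.even_iff, not_or, not_le]
  constructor
  · intro hn
    exact ⟨n / 2, by omega, by omega⟩
  · rintro ⟨j, hj, rfl⟩
    omega

theorem filter_exit_eq_image (hN : 2 * m + 1 ≤ N) :
    (range N).filter (fun n => ¬ Gam11 m n ∧ Gam11 m (n - 1)) =
      (range m).image (fun j => 2 * j + 1) := by
  ext n
  simp only [mem_filter, mem_range, mem_image, Gam11, Nat.even_iff, not_or, not_le]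
  constructor
  · intro hn
    exact ⟨n / 2, by omega, by omega⟩
  · rintro ⟨j, hj, rfl⟩
    omega

end Gam11

theorem stmt11_general {K : Type*} [CommRing K] (m : ℕ) (q t : K)
    (N : ℕ) (hN : 2 * m + 2 ≤ N) :
    (∑ n ∈ (Finset.range N).filter (fun n => Gam11 m n ∧ (n = 0 ∨ ¬ Gam11 m (n - 1))),
        q ^ ((Finset.range n).filter (fun k => ¬ Gam11 m k)).card * t ^ n) -
      (∑ n ∈ (Finset.range N).filter (fun n => ¬ Gam11 m n ∧ Gam11 m (n - 1)),
        q ^ ((Finset.range (n - 1)).filter (fun k => ¬ Gam11 m k)).card * t ^ n) =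
      (∑ j ∈ Finset.range (m + 1), q ^ j * t ^ (2 * j)) -
        t * ∑ j ∈ Finset.range m, q ^ j * t ^ (2 * j) := by
  rw [Gam11.filter_entry_eq_image (by omega), Gam11.filter_exit_eq_image (by omega),
    sum_image (fun a _ b _ h => by omega), sum_image (fun a _ b _ h => by omega), mul_sum]
  congr 1 <;> refine sum_congr rfl fun j hj => ?_ <;> rw [mem_range] at hj
  · rw [Gam11.card_filter_not_range_two_mul (by omega)]
  · rw [Nat.add_sub_cancel, Gam11.card_filter_not_range_two_mul (by omega)]
    ring

/-- For `Γ = ⟨2,2m+1⟩` with gap-counting `g(n) = #{k < n : k ∉ Γ}`: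
`L_Γ(q,t) = ∑_{n∈Γ, n−1∉Γ} q^{g(n)} t^n − ∑_{n∉Γ, n−1∈Γ} q^{g(n−1)} t^n
= ∑_{j=0}^m q^j t^{2j} − t ∑_{j=0}^{m−1} q^j t^{2j}` (with `n = 0` in the first
sum, and the sums truncated at any `N ≥ 2m+2`, beyond all contributing indices). -/
theorem stmt11 {K : Type*} [CommRing K] (m : ℕ) (hm : 1 ≤ m) (q t : K)
    (N : ℕ) (hN : 2 * m + 2 ≤ N) :
    (∑ n ∈ (Finset.range N).filter (fun n => Gam11 m n ∧ (n = 0 ∨ ¬ Gam11 m (n - 1))),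
        q ^ ((Finset.range n).filter (fun k => ¬ Gam11 m k)).card * t ^ n) -
      (∑ n ∈ (Finset.range N).filter (fun n => ¬ Gam11 m n ∧ Gam11 m (n - 1)),
        q ^ ((Finset.range (n - 1)).filter (fun k => ¬ Gam11 m k)).card * t ^ n) =
      (∑ j ∈ Finset.range (m + 1), q ^ j * t ^ (2 * j)) -
        t * ∑ j ∈ Finset.range m, q ^ j * t ^ (2 * j) :=
  stmt11_general m q t N hN
end

section
/- Let r, s ≥ 1 be coprime integers. Then the rational function ∏_{j=1}^{s−1} (1 − t^{r+s−j}) / ∏_{j=1}^{s−1} (1 − t^{j+1}) is a polynomial in t with integer coefficients. -/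
/-!
Writing each `X ^ k - 1` as the product of the cyclotomic polynomials `Φ_d` with `d ∣ k`, the
product of `X ^ k - 1` over a finite set `A` of positive integers is `∏ Φ_d ^ #{k ∈ A | d ∣ k}`.
So the denominator `∏_{k=2}^{s} (X ^ k - 1)` divides the numerator `∏_{k=r+1}^{r+s-1} (X ^ k - 1)`
as soon as every `d` has at least as many multiples in `(r, r + s - 1]` as in `(1, s]`, i.e.
`⌊s/d⌋ - ⌊1/d⌋ ≤ ⌊(r+s-1)/d⌋ - ⌊r/d⌋`. For `d ≥ 2` coprimality means `d` misses `r` or `s`,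
and then `⌊r/d⌋ + ⌊s/d⌋ ≤ ⌊(r+s-1)/d⌋`.
-/

open Polynomial Finset

namespace Nat

theorem card_filter_dvd_Ioc (d : ℕ) {m n : ℕ} (hmn : m ≤ n) :
    #{k ∈ Ioc m n | d ∣ k} = n / d - m / d := by
  have hsplit := Ioc_filter_dvd_card_eq_div n d
  rw [← Ioc_union_Ioc_eq_Ioc (zero_le m) hmn, filter_union,
    card_union_of_disjoint (disjoint_filter_filter (Ioc_disjoint_Ioc_of_le le_rfl)),
    Ioc_filter_dvd_card_eq_div] at hsplit
  omega

theorem div_add_div_le_add_sub_one_div {d r s : ℕ} (hs : 0 < s) (hds : ¬ d ∣ s) :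
    r / d + s / d ≤ (r + s - 1) / d := by
  obtain ⟨s, rfl⟩ : ∃ s', s = s' + 1 := ⟨s - 1, by omega⟩
  rw [succ_div_of_not_dvd hds, ← Nat.add_assoc, Nat.add_sub_cancel]
  exact div_add_div_le_add_div

theorem card_filter_dvd_Ioc_one_le_of_coprime {r s : ℕ} (hr : 1 ≤ r) (hs : 1 ≤ s)
    (hco : Coprime r s) (d : ℕ) : #{k ∈ Ioc 1 s | d ∣ k} ≤ #{k ∈ Ioc r (r + s - 1) | d ∣ k} := by
  rw [card_filter_dvd_Ioc d hs, card_filter_dvd_Ioc d (by omega)]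
  rcases Nat.lt_or_ge d 2 with hd | hd
  · interval_cases d <;> simp only [Nat.div_zero, Nat.div_one] <;> omega
  have hr_le : r / d ≤ (r + s - 1) / d := Nat.div_le_div_right (by omega)
  have hsum : r / d + s / d ≤ (r + s - 1) / d := by
    by_cases hds : d ∣ s
    · have hdr : ¬ d ∣ r := fun hdr => by
        have := eq_one_of_dvd_coprimes hco hdr hds
        omega
      rw [Nat.add_comm (r / d), Nat.add_comm r s]
      exact div_add_div_le_add_sub_one_div hr hdr
    · exact div_add_div_le_add_sub_one_div hs hds
  rw [Nat.div_eq_of_lt hd]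
  omega

theorem count_bind_divisors {A : Finset ℕ} (hA : 0 ∉ A) (d : ℕ) :
    (A.val.bind fun k => k.divisors.val).count d = #{k ∈ A | d ∣ k} := by
  rw [Multiset.count_bind, card_filter, sum_eq_multiset_sum]
  refine congrArg _ (Multiset.map_congr rfl fun k hk => ?_)
  simp only [Multiset.count_eq_of_nodup k.divisors.nodup, Finset.mem_val, Nat.mem_divisors,
    and_iff_left (ne_of_mem_of_not_mem hk hA)]

end Nat

namespace Polynomial

variable {R : Type*} [CommRing R]

theorem prod_X_pow_sub_one_eq_prod_cyclotomic {A : Finset ℕ} (hA : 0 ∉ A) :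
    ∏ k ∈ A, (X ^ k - 1 : R[X]) =
      ((A.val.bind fun k => k.divisors.val).map (cyclotomic · R)).prod := by
  rw [Multiset.map_bind, Multiset.prod_bind, prod_eq_multiset_prod]
  refine congrArg _ (Multiset.map_congr rfl fun k hk => ?_)
  exact (prod_cyclotomic_eq_X_pow_sub_one (Nat.pos_of_ne_zero (ne_of_mem_of_not_mem hk hA)) R).symm

theorem prod_X_pow_sub_one_dvd_prod {A B : Finset ℕ} (hA : 0 ∉ A) (hB : 0 ∉ B)
    (hAB : ∀ d, #{k ∈ A | d ∣ k} ≤ #{k ∈ B | d ∣ k}) :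
    ∏ k ∈ A, (X ^ k - 1 : R[X]) ∣ ∏ k ∈ B, (X ^ k - 1 : R[X]) := by
  rw [prod_X_pow_sub_one_eq_prod_cyclotomic hA, prod_X_pow_sub_one_eq_prod_cyclotomic hB]
  refine Multiset.prod_dvd_prod_of_le (Multiset.map_le_map (Multiset.le_iff_count.2 fun d => ?_))
  rw [Nat.count_bind_divisors hA, Nat.count_bind_divisors hB]
  exact hAB d

theorem prod_one_sub_X_pow_dvd_prod {A B : Finset ℕ} (hA : 0 ∉ A) (hB : 0 ∉ B)
    (hAB : ∀ d, #{k ∈ A | d ∣ k} ≤ #{k ∈ B | d ∣ k}) :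
    ∏ k ∈ A, (1 - X ^ k : R[X]) ∣ ∏ k ∈ B, (1 - X ^ k : R[X]) := by
  have hassoc (C : Finset ℕ) : Associated (∏ k ∈ C, (1 - X ^ k : R[X])) (∏ k ∈ C, (X ^ k - 1)) :=
    Associated.prod C _ _ fun k _ => ⟨-1, by simp⟩
  exact (hassoc A).dvd_iff_dvd_left.2 <| (hassoc B).dvd_iff_dvd_right.2 <|
    prod_X_pow_sub_one_dvd_prod hA hB hAB

end Polynomial

/-- For coprime `r, s ≥ 1`, the rational-slope `t`-Catalan number
`∏_{j=1}^{s−1}(1 − t^{r+s−j}) / ∏_{j=1}^{s−1}(1 − t^{j+1})` is a polynomial with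
integer coefficients: the denominator divides the numerator in `ℤ[t]`. -/
theorem stmt14 (r s : ℕ) (hr : 1 ≤ r) (hs : 1 ≤ s) (hco : Nat.Coprime r s) :
    ∃ p : Polynomial ℤ,
      (∏ j ∈ Finset.Icc 1 (s - 1), (1 - (Polynomial.X : Polynomial ℤ) ^ (r + s - j))) =
        p * ∏ j ∈ Finset.Icc 1 (s - 1), (1 - (Polynomial.X : Polynomial ℤ) ^ (j + 1)) := by
  have hnum : ∏ j ∈ Icc 1 (s - 1), (1 - (X : ℤ[X]) ^ (r + s - j)) =
      ∏ k ∈ Ioc r (r + s - 1), (1 - X ^ k) := by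
    refine prod_nbij' (fun j => r + s - j) (fun k => r + s - k) ?_ ?_ ?_ ?_ fun _ _ => rfl <;>
      · intro i hi
        simp only [mem_Icc, mem_Ioc] at hi ⊢
        omega
  have hden : ∏ j ∈ Icc 1 (s - 1), (1 - (X : ℤ[X]) ^ (j + 1)) = ∏ k ∈ Ioc 1 s, (1 - X ^ k) := by
    refine prod_nbij' (· + 1) (· - 1) ?_ ?_ ?_ ?_ fun _ _ => rfl <;>
      · intro i hi
        simp only [mem_Icc, mem_Ioc] at hi ⊢
        omega
  obtain ⟨p, hp⟩ := prod_one_sub_X_pow_dvd_prod (R := ℤ) (by simp) (by simp)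
    (Nat.card_filter_dvd_Ioc_one_le_of_coprime hr hs hco)
  exact ⟨p, by rw [hnum, hden, hp, mul_comm]⟩
end

section
/- Let F be a finite field with q elements and let R = {f ∈ F[[z]] : the coefficient of z in f is 0} be the subring F[[z^2, z^3]] of the formal power series ring F[[z]]. Then for every d ≥ 0, the number of ideals I ⊆ R with dim_F(R/I) = d equals 1 if d ∈ {0, 1} and equals q + 1 if d ≥ 2. Consequently (1 − t)·∑_{I ideal of R, finite codim} t^{dim_F(R/I)} = 1 + q t^2. -/
/-!
A nonzero ideal `I` of `R` contains an element `f` of minimal order `n`. Since the conductor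
`z² F[[z]]` lies in `R`, `I` contains every element of order `≥ n + 2`, so `I` is determined by
the jets `(c_n, c_{n+1})` of its elements; and since `R` has no `z`-term, multiplication by
`r ∈ R` acts on these jets as the scalar `r(0)`. Hence `I` is `R` (if `n = 0`), all of
`z^n F[[z]] ∩ R` (codimension `n - 1`), or the preimage of a line `c_{n+1} = λ c_n`
(codimension `n`): one ideal in codimensions `0` and `1`, and `q + 1` in each codimension `≥ 2`.
-/

/-- The local ring `R = F[[z²,z³]] = {f ∈ F[[z]] : coefficient of z is 0}` of the
cusp `x² = y³`, as a subalgebra of `F[[z]]`. -/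
def Rcusp (F : Type*) [Field F] : Subalgebra F (PowerSeries F) where
  carrier := {f | PowerSeries.coeff 1 f = 0}
  add_mem' := by
    intro f g hf hg
    simp only [Set.mem_setOf_eq, map_add] at *
    rw [hf, hg, add_zero]
  mul_mem' := by
    intro f g hf hg
    simp only [Set.mem_setOf_eq] at *
    rw [PowerSeries.coeff_mul, Finset.Nat.sum_antidiagonal_eq_sum_range_succ_mk]
    simp [Finset.sum_range_succ, hf, hg]
  algebraMap_mem' := by
    intro r
    simp [Set.mem_setOf_eq, PowerSeries.algebraMap_apply, PowerSeries.coeff_C]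

open PowerSeries

section QuotientByKernel

variable {F A V : Type*} [Field F] [CommRing A] [Algebra F A] [AddCommGroup V] [Module F V]

noncomputable def Ideal.quotientEquivOfKer {I : Ideal A} (L : A →ₗ[F] V)
    (hker : LinearMap.ker L = I.restrictScalars F) (hL : Function.Surjective L) :
    (A ⧸ I) ≃ₗ[F] V :=
  (Submodule.Quotient.restrictScalarsEquiv F I).symm ≪≫ₗ
    Submodule.quotEquivOfEq _ _ hker.symm ≪≫ₗ L.quotKerEquivOfSurjective hL

theorem Ideal.finrank_le_finrank_quotient {I : Ideal A} [Module.Finite F (A ⧸ I)]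
    (L : A →ₗ[F] V) (hker : I.restrictScalars F ≤ LinearMap.ker L)
    (hL : Function.Surjective L) : Module.finrank F V ≤ Module.finrank F (A ⧸ I) := by
  refine LinearMap.finrank_le_finrank_of_surjective
    (f := (I.restrictScalars F).liftQ L hker ∘ₗ
      (Submodule.Quotient.restrictScalarsEquiv F I).symm.toLinearMap) ?_
  rw [LinearMap.coe_comp, LinearEquiv.coe_coe]
  refine .comp (LinearMap.range_eq_top.mp ?_) (LinearEquiv.surjective _)
  rw [Submodule.range_liftQ, LinearMap.range_eq_top.mpr hL]

end QuotientByKernel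

namespace Cusp

variable {F : Type*} [Field F]

theorem mem_Rcusp_iff {f : F⟦X⟧} : f ∈ Rcusp F ↔ coeff 1 f = 0 := Iff.rfl

theorem X_pow_mem_Rcusp {m : ℕ} (hm : m ≠ 1) : (X : F⟦X⟧) ^ m ∈ Rcusp F := by
  simp [mem_Rcusp_iff, coeff_X_pow, Ne.symm hm]

theorem X_sq_mul_mem_Rcusp (t : F⟦X⟧) : X ^ 2 * t ∈ Rcusp F :=
  X_pow_dvd_iff.mp (dvd_mul_right _ _) 1 one_lt_two

theorem coeff_mul_of_X_pow_dvd (r : F⟦X⟧) {f : F⟦X⟧} {n : ℕ} (hf : X ^ n ∣ f) :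
    coeff n (r * f) = coeff 0 r * coeff n f := by
  obtain ⟨u, rfl⟩ := hf
  rw [mul_left_comm, coeff_X_pow_mul', coeff_X_pow_mul', if_pos le_rfl, Nat.sub_self]
  simp

theorem coeff_succ_mul_of_X_pow_dvd {r f : F⟦X⟧} (hr : r ∈ Rcusp F) {n : ℕ} (hf : X ^ n ∣ f) :
    coeff (n + 1) (r * f) = coeff 0 r * coeff (n + 1) f := by
  obtain ⟨u, rfl⟩ := hf
  rw [mul_left_comm, coeff_X_pow_mul', coeff_X_pow_mul', if_pos (Nat.le_succ n),
    Nat.add_sub_cancel_left, coeff_mul, Finset.Nat.antidiagonal_succ]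
  simp [mem_Rcusp_iff.mp hr]

/-- `z^n F[[z]] ∩ R`; for `n ≥ 2` this is the ideal `⟨z^n, z^{n+1}⟩`. -/
noncomputable def orderIdeal (n : ℕ) : Ideal (Rcusp F) :=
  Ideal.comap (Rcusp F).val (Ideal.span {X ^ n})

theorem mem_orderIdeal {n : ℕ} {f : Rcusp F} : f ∈ orderIdeal n ↔ X ^ n ∣ (f : F⟦X⟧) :=
  Ideal.mem_span_singleton

theorem coeff_eq_zero_of_mem_orderIdeal {n j : ℕ} {f : Rcusp F} (hf : f ∈ orderIdeal n)
    (hj : j < n) : coeff j (f : F⟦X⟧) = 0 :=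
  X_pow_dvd_iff.mp (mem_orderIdeal.mp hf) j hj

/-- For `n ≥ 2` this is the ideal `⟨z^n + l z^{n+1}⟩`. -/
noncomputable def slopeIdeal (n : ℕ) (l : F) : Ideal (Rcusp F) where
  carrier := {f | X ^ n ∣ (f : F⟦X⟧) ∧ coeff (n + 1) (f : F⟦X⟧) = l * coeff n (f : F⟦X⟧)}
  zero_mem' := by simp
  add_mem' := by
    rintro f g ⟨hf, hf'⟩ ⟨hg, hg'⟩
    refine ⟨dvd_add hf hg, ?_⟩
    simp only [Subalgebra.coe_add, map_add, hf', hg', mul_add]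
  smul_mem' := by
    rintro r f ⟨hf, hf'⟩
    refine ⟨dvd_mul_of_dvd_right hf _, ?_⟩
    simp only [smul_eq_mul, Subalgebra.coe_mul]
    rw [coeff_succ_mul_of_X_pow_dvd r.2 hf, coeff_mul_of_X_pow_dvd _ hf, hf', mul_left_comm]

theorem mem_slopeIdeal {n : ℕ} {l : F} {f : Rcusp F} :
    f ∈ slopeIdeal n l ↔
      X ^ n ∣ (f : F⟦X⟧) ∧ coeff (n + 1) (f : F⟦X⟧) = l * coeff n (f : F⟦X⟧) :=
  Iff.rfl

noncomputable def coeffₗ (j : ℕ) : Rcusp F →ₗ[F] F :=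
  (coeff j).comp (Rcusp F).val.toLinearMap

@[simp]
theorem coeffₗ_apply (j : ℕ) (f : Rcusp F) : coeffₗ j f = coeff j (f : F⟦X⟧) := rfl

/-- The exponents of a monomial basis of `R ⧸ orderIdeal n`. -/
def lowExponents (n : ℕ) : Finset ℕ := (Finset.range n).erase 1

theorem card_lowExponents {n : ℕ} (hn : 1 ≤ n) : (lowExponents (n + 1)).card = n := by
  rw [lowExponents, Finset.card_erase_of_mem (by simp; omega), Finset.card_range,
    Nat.add_sub_cancel]

noncomputable def lowCoeffs (n : ℕ) : Rcusp F →ₗ[F] (lowExponents n → F) :=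
  LinearMap.pi fun j => coeffₗ j

noncomputable def slopeCoeffs (n : ℕ) (l : F) : Rcusp F →ₗ[F] (lowExponents n → F) × F :=
  (lowCoeffs n).prod (coeffₗ (n + 1) - l • coeffₗ n)

theorem ker_lowCoeffs (n : ℕ) :
    LinearMap.ker (lowCoeffs (F := F) n) = (orderIdeal n).restrictScalars F := by
  ext f
  rw [LinearMap.mem_ker, funext_iff]
  simp only [lowCoeffs, Subtype.forall, lowExponents, Finset.mem_erase, Finset.mem_range,
    Submodule.restrictScalars_mem, mem_orderIdeal, X_pow_dvd_iff]
  refine ⟨fun h j hj => ?_, fun h j hj => h j hj.2⟩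
  rcases eq_or_ne j 1 with rfl | hj1
  exacts [f.2, h j ⟨hj1, hj⟩]

theorem ker_slopeCoeffs (n : ℕ) (l : F) :
    LinearMap.ker (slopeCoeffs n l) = (slopeIdeal n l).restrictScalars F := by
  ext f
  have := SetLike.ext_iff.mp (ker_lowCoeffs (F := F) n) f
  simp only [LinearMap.mem_ker, Submodule.restrictScalars_mem, mem_orderIdeal] at this
  simp [slopeCoeffs, mem_slopeIdeal, this, sub_eq_zero]

noncomputable def xPow (m : ℕ) (hm : m ≠ 1) : Rcusp F := ⟨X ^ m, X_pow_mem_Rcusp hm⟩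

@[simp]
theorem coe_xPow (m : ℕ) (hm : m ≠ 1) : (xPow (F := F) m hm : F⟦X⟧) = X ^ m := rfl

noncomputable def ofLowCoeffs (n : ℕ) (g : lowExponents n → F) : Rcusp F :=
  ⟨mk fun m => if h : m ∈ lowExponents n then g ⟨m, h⟩ else 0, by
    simp [mem_Rcusp_iff, lowExponents]⟩

theorem slopeCoeffs_surjective {n : ℕ} (hn : 1 ≤ n) (l : F) :
    Function.Surjective (slopeCoeffs n l) := by
  rintro ⟨g, c⟩
  refine ⟨ofLowCoeffs n g + c • xPow (n + 1) (by omega), Prod.ext (funext fun j => ?_) ?_⟩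
  · have := j.2
    simp only [lowExponents, Finset.mem_erase, Finset.mem_range] at this
    simp [slopeCoeffs, lowCoeffs, ofLowCoeffs, coeff_X_pow]
    omega
  · rw [slopeCoeffs, LinearMap.prod_apply]
    simp [ofLowCoeffs, lowExponents, coeff_X_pow]

theorem lowCoeffs_surjective (n : ℕ) : Function.Surjective (lowCoeffs (F := F) n) :=
  fun g => ⟨ofLowCoeffs n g, funext fun j => by simp [lowCoeffs, ofLowCoeffs]⟩

def HasCodim (I : Ideal (Rcusp F)) (d : ℕ) : Prop :=
  FiniteDimensional F (Rcusp F ⧸ I) ∧ Module.finrank F (Rcusp F ⧸ I) = d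

theorem hasCodim_of_ker {I : Ideal (Rcusp F)} {V : Type*} [AddCommGroup V] [Module F V]
    [FiniteDimensional F V] (L : Rcusp F →ₗ[F] V)
    (hker : LinearMap.ker L = I.restrictScalars F) (hL : Function.Surjective L) :
    HasCodim I (Module.finrank F V) :=
  let e := Ideal.quotientEquivOfKer L hker hL
  ⟨Module.Finite.equiv e.symm, e.finrank_eq⟩

theorem hasCodim_top : HasCodim (⊤ : Ideal (Rcusp F)) 0 :=
  ⟨inferInstance, Module.finrank_zero_of_subsingleton⟩

theorem hasCodim_orderIdeal {n : ℕ} (hn : 1 ≤ n) : HasCodim (orderIdeal (F := F) (n + 1)) n := by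
  simpa [card_lowExponents hn] using
    hasCodim_of_ker _ (ker_lowCoeffs (F := F) (n + 1)) (lowCoeffs_surjective _)

theorem hasCodim_slopeIdeal {n : ℕ} (hn : 2 ≤ n) (l : F) : HasCodim (slopeIdeal n l) n := by
  obtain ⟨m, rfl⟩ := Nat.exists_eq_add_of_le' hn
  simpa [card_lowExponents (n := m + 1) (by omega)] using
    hasCodim_of_ker _ (ker_slopeCoeffs (m + 2) l) (slopeCoeffs_surjective (by omega) l)

theorem ne_bot_of_hasCodim {I : Ideal (Rcusp F)} {d : ℕ} (hI : HasCodim I d) : I ≠ ⊥ := by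
  rintro rfl
  obtain ⟨_, hd⟩ := hI
  have := Ideal.finrank_le_finrank_quotient (lowCoeffs (F := F) (d + 2))
    (by rw [Submodule.restrictScalars_bot]; exact bot_le)
    (lowCoeffs_surjective _)
  rw [Module.finrank_fintype_fun_eq_card, Fintype.card_coe, card_lowExponents (by omega), hd]
    at this
  omega

theorem mem_of_coeff_eq {I : Ideal (Rcusp F)} {n : ℕ} (hI : orderIdeal n ≤ I) {f g : Rcusp F}
    (hg : g ∈ I) (hfg : ∀ j < n, coeff j (f : F⟦X⟧) = coeff j (g : F⟦X⟧)) : f ∈ I := by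
  have hsub : f - g ∈ I := hI <| mem_orderIdeal.mpr <| X_pow_dvd_iff.mpr fun j hj => by
    simp [hfg j hj]
  simpa using I.add_mem hsub hg

theorem orderIdeal_add_two_le {I : Ideal (Rcusp F)} {n : ℕ} {f : Rcusp F} (hfI : f ∈ I)
    (hf : X ^ n ∣ (f : F⟦X⟧)) (hfn : coeff n (f : F⟦X⟧) ≠ 0) : orderIdeal (n + 2) ≤ I := by
  obtain ⟨u, hu⟩ := hf
  have hu0 : constantCoeff u ≠ 0 := by
    rwa [hu, coeff_X_pow_mul', if_pos le_rfl, Nat.sub_self,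
      coeff_zero_eq_constantCoeff_apply] at hfn
  intro g hg
  obtain ⟨t, ht⟩ := mem_orderIdeal.mp hg
  -- `z^(n+2) t = (z² t u⁻¹) (z^n u)`, and `z² t u⁻¹ ∈ R`
  have hgf : g = ⟨X ^ 2 * (t * u⁻¹), X_sq_mul_mem_Rcusp _⟩ * f := by
    apply Subtype.ext
    rw [Subalgebra.coe_mul, ht, hu]
    linear_combination (-(X ^ (n + 2) * t)) * PowerSeries.inv_mul_cancel u hu0
  exact hgf ▸ I.mul_mem_left _ hfI

theorem eq_top_of_orderIdeal_two_le {I : Ideal (Rcusp F)} (hI : orderIdeal 2 ≤ I)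
    {f : Rcusp F} (hfI : f ∈ I) (hf : coeff 0 (f : F⟦X⟧) ≠ 0) : I = ⊤ := by
  refine (Ideal.eq_top_iff_one I).mpr <|
    mem_of_coeff_eq hI (I.smul_of_tower_mem (coeff 0 (f : F⟦X⟧))⁻¹ hfI) fun j hj => ?_
  interval_cases j
  · simpa using (inv_mul_cancel₀ hf).symm
  · simp [mem_Rcusp_iff.mp f.2]

theorem eq_orderIdeal_or_eq_slopeIdeal {I : Ideal (Rcusp F)} {n : ℕ} (hle : I ≤ orderIdeal n)
    (hge : orderIdeal (n + 2) ≤ I) {f : Rcusp F} (hfI : f ∈ I) (hfn : coeff n (f : F⟦X⟧) ≠ 0) :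
    I = orderIdeal n ∨ ∃ l, I = slopeIdeal n l := by
  have hlow {h : Rcusp F} (hh : h ∈ orderIdeal n) {j : ℕ} (hj : j < n) :=
    coeff_eq_zero_of_mem_orderIdeal hh hj
  set a := coeff n (f : F⟦X⟧)
  set b := coeff (n + 1) (f : F⟦X⟧)
  by_cases hsep : ∃ g ∈ I, coeff n (g : F⟦X⟧) = 0 ∧ coeff (n + 1) (g : F⟦X⟧) ≠ 0
  · obtain ⟨g, hgI, hgn, hgn'⟩ := hsep
    refine .inl (le_antisymm hle fun h hh => ?_)
    set α := coeff n (h : F⟦X⟧) / a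
    set β := (coeff (n + 1) (h : F⟦X⟧) - α * b) / coeff (n + 1) (g : F⟦X⟧)
    refine mem_of_coeff_eq hge
      (I.add_mem (I.smul_of_tower_mem α hfI) (I.smul_of_tower_mem β hgI)) fun j hj => ?_
    simp only [Subalgebra.coe_add, Subalgebra.coe_smul, map_add, map_smul, smul_eq_mul]
    obtain hj | rfl | rfl : j < n ∨ j = n ∨ j = n + 1 := by omega
    · simp [hlow hh hj, hlow (hle hfI) hj, hlow (hle hgI) hj]
    · simp [α, a, hgn, hfn]
    · simp [β, b, hgn']
  · push Not at hsep
    refine .inr ⟨b / a, le_antisymm (fun h hh => ⟨mem_orderIdeal.mp (hle hh), ?_⟩) fun h hh => ?_⟩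
    · obtain ⟨hdvd, hslope⟩ := mem_slopeIdeal.mp hh
      refine mem_of_coeff_eq hge (I.smul_of_tower_mem (coeff n (h : F⟦X⟧) / a) hfI)
        fun j hj => ?_
      simp only [Subalgebra.coe_smul, map_smul, smul_eq_mul]
      obtain hj | rfl | rfl : j < n ∨ j = n ∨ j = n + 1 := by omega
      · simp [X_pow_dvd_iff.mp hdvd j hj, hlow (hle hfI) hj]
      · simp [a, hfn]
      · rw [hslope]
        ring
    · have := hsep (h - (coeff n (h : F⟦X⟧) / a) • f) (I.sub_mem hh (I.smul_of_tower_mem _ hfI))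
        (by simp [a, hfn])
      simp only [Subalgebra.coe_sub, Subalgebra.coe_smul, map_sub, map_smul, smul_eq_mul,
        sub_eq_zero] at this
      rw [this]
      ring

theorem eq_top_or_orderIdeal_or_slopeIdeal {I : Ideal (Rcusp F)} (hI : I ≠ ⊥) :
    I = ⊤ ∨ ∃ n, 2 ≤ n ∧ (I = orderIdeal n ∨ ∃ l, I = slopeIdeal n l) := by
  classical
  have hex : ∃ n, ∃ f ∈ I, coeff n (f : F⟦X⟧) ≠ 0 := by
    obtain ⟨f, hfI, hf⟩ := Submodule.exists_mem_ne_zero_of_ne_bot hI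
    obtain ⟨n, hn⟩ := exists_coeff_ne_zero_iff_ne_zero.mpr (Subtype.coe_ne_coe.mpr hf)
    exact ⟨n, f, hfI, hn⟩
  obtain ⟨f, hfI, hfn⟩ := Nat.find_spec hex
  set n := Nat.find hex
  have hle : I ≤ orderIdeal n := fun g hg => mem_orderIdeal.mpr <| X_pow_dvd_iff.mpr
    fun m hm => by_contra fun h => Nat.find_min hex hm ⟨g, hg, h⟩
  have hge := orderIdeal_add_two_le hfI (mem_orderIdeal.mp (hle hfI)) hfn
  obtain h0 | h1 | h2 : n = 0 ∨ n = 1 ∨ 2 ≤ n := by omega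
  · rw [h0] at hfn hge
    exact .inl (eq_top_of_orderIdeal_two_le hge hfI hfn)
  · exact absurd (h1 ▸ f.2) hfn
  · exact .inr ⟨n, h2, eq_orderIdeal_or_eq_slopeIdeal hle hge hfI hfn⟩

theorem hasCodim_cases {I : Ideal (Rcusp F)} {d : ℕ} (hI : HasCodim I d) :
    (d = 0 ∧ I = ⊤) ∨ (1 ≤ d ∧ I = orderIdeal (d + 1)) ∨ (2 ≤ d ∧ ∃ l, I = slopeIdeal d l) := by
  rcases eq_top_or_orderIdeal_or_slopeIdeal (ne_bot_of_hasCodim hI) with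
    rfl | ⟨n, hn, rfl | ⟨l, rfl⟩⟩
  · exact .inl ⟨hI.2.symm.trans hasCodim_top.2, rfl⟩
  · obtain ⟨m, rfl⟩ := Nat.exists_eq_add_of_le' hn
    obtain rfl : d = m + 1 := hI.2.symm.trans (hasCodim_orderIdeal (by omega)).2
    exact .inr (.inl ⟨by omega, rfl⟩)
  · obtain rfl : d = n := hI.2.symm.trans (hasCodim_slopeIdeal hn l).2
    exact .inr (.inr ⟨hn, l, rfl⟩)

theorem xPow_add_smul_xPow_succ_mem_slopeIdeal_iff {n : ℕ} (hn : 2 ≤ n) {l l' : F} :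
    xPow n (by omega) + l • xPow (n + 1) (by omega) ∈ slopeIdeal n l' ↔ l = l' := by
  have hdvd : X ^ n ∣ ((xPow n (by omega) + l • xPow (n + 1) (by omega) : Rcusp F) : F⟦X⟧) :=
    X_pow_dvd_iff.mpr fun j hj => by simp [coeff_X_pow, hj.ne, (hj.trans n.lt_succ_self).ne]
  rw [mem_slopeIdeal, and_iff_right hdvd]
  simp [coeff_X_pow]

theorem slopeIdeal_injective {n : ℕ} (hn : 2 ≤ n) : Function.Injective (slopeIdeal (F := F) n) :=
  fun _ _ h => (xPow_add_smul_xPow_succ_mem_slopeIdeal_iff hn).mp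
    (h ▸ (xPow_add_smul_xPow_succ_mem_slopeIdeal_iff hn).mpr rfl)

theorem orderIdeal_succ_ne_slopeIdeal {n : ℕ} (hn : 1 ≤ n) (l : F) :
    orderIdeal (n + 1) ≠ slopeIdeal n l := by
  intro h
  have hmem : xPow (F := F) (n + 1) (by omega) ∈ orderIdeal (n + 1) := mem_orderIdeal.mpr dvd_rfl
  simp [h, mem_slopeIdeal, coeff_X_pow] at hmem

theorem card_hasCodim_zero : Nat.card {I : Ideal (Rcusp F) // HasCodim I 0} = 1 :=
  Nat.card_eq_one_iff_exists.mpr ⟨⟨⊤, hasCodim_top⟩, fun ⟨_, hI⟩ => Subtype.ext <| by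
    rcases hasCodim_cases hI with ⟨-, h⟩ | ⟨h, -⟩ | ⟨h, -⟩
    exacts [h, absurd h (by omega), absurd h (by omega)]⟩

theorem card_hasCodim_one : Nat.card {I : Ideal (Rcusp F) // HasCodim I 1} = 1 :=
  Nat.card_eq_one_iff_exists.mpr ⟨⟨orderIdeal 2, hasCodim_orderIdeal le_rfl⟩, fun ⟨_, hI⟩ =>
    Subtype.ext <| by
      rcases hasCodim_cases hI with ⟨h, -⟩ | ⟨-, h⟩ | ⟨h, -⟩
      exacts [absurd h one_ne_zero, h, absurd h (by omega)]⟩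

theorem card_hasCodim_of_two_le [Finite F] {d : ℕ} (hd : 2 ≤ d) :
    Nat.card {I : Ideal (Rcusp F) // HasCodim I d} = Nat.card F + 1 := by
  let e : Option F → {I : Ideal (Rcusp F) // HasCodim I d} := fun o =>
    o.elim ⟨orderIdeal (d + 1), hasCodim_orderIdeal (by omega)⟩
      fun l => ⟨slopeIdeal d l, hasCodim_slopeIdeal hd l⟩
  have he : Function.Bijective e := by
    refine ⟨?_, fun ⟨I, hI⟩ => ?_⟩
    · rintro (_ | l) (_ | l') h <;> simp only [e, Option.elim, Subtype.mk.injEq] at h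
      · rfl
      · exact absurd h (orderIdeal_succ_ne_slopeIdeal (by omega) l')
      · exact absurd h.symm (orderIdeal_succ_ne_slopeIdeal (by omega) l)
      · rw [slopeIdeal_injective hd h]
    · rcases hasCodim_cases hI with ⟨h, -⟩ | ⟨-, rfl⟩ | ⟨-, l, rfl⟩
      · omega
      · exact ⟨none, rfl⟩
      · exact ⟨some l, rfl⟩
  rw [← Nat.card_congr (Equiv.ofBijective e he), Finite.card_option]

end Cusp

theorem PowerSeries.one_sub_X_mul_mk_eq_one_add_C_mul_X_sq {R : Type*} [CommRing R] {a : ℕ → R}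
    {c : R} (h0 : a 0 = 1) (h1 : a 1 = 1) (h : ∀ d, 2 ≤ d → a d = c + 1) :
    (1 - X) * mk a = 1 + C c * X ^ 2 := by
  ext (_ | _ | _ | n)
  · simp [sub_mul, h0]
  · simp [sub_mul, coeff_succ_X_mul, coeff_X_pow, h0, h1]
  · simp [sub_mul, coeff_succ_X_mul, coeff_X_pow, h1, h 2 le_rfl]
  · simp [sub_mul, coeff_succ_X_mul, coeff_X_pow, h (n + 3) (by omega), h (n + 2) (by omega)]

/-- Count of ideals of given codimension in `R = F[[z²,z³]]` over a finite field `F`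
with `q` elements: one ideal in codimensions `0` and `1`, and `q + 1` in each
codimension `d ≥ 2`; consequently
`(1 − t)·∑_I t^{dim_F(R/I)} = 1 + q t²`. -/
theorem stmt15 (F : Type*) [Field F] [Fintype F] (q : ℕ) (hq : Fintype.card F = q) :
    (∀ d : ℕ, (d = 0 ∨ d = 1) →
      Nat.card {I : Ideal ↥(Rcusp F) //
        FiniteDimensional F (↥(Rcusp F) ⧸ I) ∧
          Module.finrank F (↥(Rcusp F) ⧸ I) = d} = 1) ∧
    (∀ d : ℕ, 2 ≤ d →
      Nat.card {I : Ideal ↥(Rcusp F) //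
        FiniteDimensional F (↥(Rcusp F) ⧸ I) ∧
          Module.finrank F (↥(Rcusp F) ⧸ I) = d} = q + 1) ∧
    (1 - PowerSeries.X) *
        PowerSeries.mk (fun d =>
          (Nat.card {I : Ideal ↥(Rcusp F) //
            FiniteDimensional F (↥(Rcusp F) ⧸ I) ∧
              Module.finrank F (↥(Rcusp F) ⧸ I) = d} : ℤ)) =
      1 + PowerSeries.C (q : ℤ) * PowerSeries.X ^ 2 := by
  have hsmall : ∀ d : ℕ, (d = 0 ∨ d = 1) →
      Nat.card {I : Ideal (Rcusp F) // Cusp.HasCodim I d} = 1 := by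
    rintro d (rfl | rfl)
    exacts [Cusp.card_hasCodim_zero, Cusp.card_hasCodim_one]
  have hlarge : ∀ d : ℕ, 2 ≤ d → Nat.card {I : Ideal (Rcusp F) // Cusp.HasCodim I d} = q + 1 :=
    fun d hd => by rw [Cusp.card_hasCodim_of_two_le hd, Nat.card_eq_fintype_card, hq]
  refine ⟨hsmall, hlarge, PowerSeries.one_sub_X_mul_mk_eq_one_add_C_mul_X_sq ?_ ?_ fun d hd => ?_⟩
  · exact_mod_cast hsmall 0 (.inl rfl)
  · exact_mod_cast hsmall 1 (.inr rfl)
  · exact_mod_cast hlarge d hd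
end
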